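/- arXiv:1507.04194 — 4 statements merged into one kernel-verified Lean document; each statement's English description precedes it below -/
import Mathlib

section
/- Let H ∈ (0,1), t > 0, and let g : [0,t] → ℝ be continuous with the symmetry g(s) = g(t−s) for all s ∈ [0,t]. Define F(s) = ∫₀^t g(r) · H|s−r|^{2H−1} sign(s−r) dr. Assume F is absolutely continuous on [0,t], differentiable on (0,t), and g(s) + F′(s) = 1 for all s ∈ (0,t). Then ∫₀^t g(s) ds + 2H ∫₀^t g(τ) τ^{2H−1} dτ = t. -/
open MeasureTheory Real Set intervalIntegral

/-! At the endpoints the kernel has a fixed sign, so `F t = H ∫₀^t g(r) (t-r)^{2H-1} dr`, which by the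
symmetry of `g` equals `H ∫₀^t g(τ) τ^{2H-1} dτ`, and `F 0` is its negative. Integrating `g + F' = 1`
over `[0,t]` and using `∫₀^t F' = F t - F 0` gives the identity. -/

lemma integral_mul_comp_sub_left_of_symm (g k : ℝ → ℝ) {t : ℝ} (ht : 0 ≤ t)
    (hg : ∀ s ∈ Icc 0 t, g s = g (t - s)) :
    ∫ r in (0:ℝ)..t, g r * k (t - r) = ∫ r in (0:ℝ)..t, g r * k r := by
  calc ∫ r in (0:ℝ)..t, g r * k (t - r)
      = ∫ r in (0:ℝ)..t, g (t - r) * k (t - r) :=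
        integral_congr fun r hr => by rw [uIcc_of_le ht] at hr; rw [← hg r hr]
    _ = ∫ r in (0:ℝ)..t, g r * k r := by
        rw [integral_comp_sub_left (fun x => g x * k x)]; simp

lemma integral_mul_abs_rpow_mul_sign (g : ℝ → ℝ) (c p : ℝ) {t : ℝ} (ht : 0 ≤ t) :
    ∫ r in (0:ℝ)..t, g r * (c * |r| ^ p * Real.sign r) = c * ∫ r in (0:ℝ)..t, g r * r ^ p := by
  rw [← intervalIntegral.integral_const_mul, integral_of_le ht, integral_of_le ht]
  refine setIntegral_congr_fun measurableSet_Ioc fun r hr => ?_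
  rw [abs_of_pos hr.1, Real.sign_of_pos hr.1]
  ring

lemma integral_eq_of_eqOn_Ioo {f : ℝ → ℝ} {c t : ℝ} (ht : 0 ≤ t) (hf : EqOn f (fun _ => c) (Ioo 0 t)) :
    ∫ s in (0:ℝ)..t, f s = t * c := by
  rw [integral_of_le ht, integral_Ioc_eq_integral_Ioo, setIntegral_congr_fun measurableSet_Ioo hf]
  simp [ht]

theorem stmt_1_general (H t : ℝ) (ht : 0 < t)
    (g F F' : ℝ → ℝ)
    (hg_cont : ContinuousOn g (Set.Icc 0 t))
    (hg_sym : ∀ s ∈ Set.Icc (0:ℝ) t, g s = g (t - s))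
    (hF : ∀ s, F s = ∫ r in (0:ℝ)..t, g r * (H * |s - r| ^ (2*H - 1) * Real.sign (s - r)))
    (hF'_int : IntervalIntegrable F' volume 0 t)
    (hF_ac : ∀ s ∈ Set.Icc (0:ℝ) t, F s - F 0 = ∫ r in (0:ℝ)..s, F' r)
    (heq : ∀ s ∈ Set.Ioo (0:ℝ) t, g s + F' s = 1) :
    (∫ s in (0:ℝ)..t, g s) + 2*H * ∫ τ in (0:ℝ)..t, g τ * τ ^ (2*H - 1) = t := by
  set I := ∫ τ in (0:ℝ)..t, g τ * τ ^ (2*H - 1)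
  have hF_t : F t = H * I := by
    rw [hF, integral_mul_comp_sub_left_of_symm g (fun x => H * |x| ^ (2*H - 1) * Real.sign x) ht.le
      hg_sym, integral_mul_abs_rpow_mul_sign g H _ ht.le]
  have hF_0 : F 0 = -(H * I) := by
    simp only [hF, zero_sub, abs_neg, Real.sign_neg, mul_neg, intervalIntegral.integral_neg]
    rw [integral_mul_abs_rpow_mul_sign g H _ ht.le]
  have hg_int : IntervalIntegrable g volume 0 t :=
    (hg_cont.mono (uIcc_of_le ht.le).subset).intervalIntegrable
  have h_total : ∫ s in (0:ℝ)..t, (g s + F' s) = t := by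
    simpa using integral_eq_of_eqOn_Ioo ht.le heq
  rw [integral_add hg_int hF'_int, ← hF_ac t ⟨ht.le, le_rfl⟩, hF_t, hF_0] at h_total
  linarith

/-- integrating the Wiener–Hopf equation.
Let `g` be continuous on `[0,t]` with the symmetry `g(s) = g(t−s)`, and let
`F(s) = ∫₀^t g(r)·H|s−r|^{2H−1} sign(s−r) dr`.  If `F` is absolutely continuous on
`[0,t]` (expressed by the fundamental theorem of calculus representation
`F(s) − F(0) = ∫₀^s F′`), differentiable on `(0,t)`, and `g(s) + F′(s) = 1` on `(0,t)`,
then `∫₀^t g(s) ds + 2H ∫₀^t g(τ) τ^{2H−1} dτ = t`. -/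
theorem stmt_1 (H t : ℝ) (hH : H ∈ Set.Ioo (0:ℝ) 1) (ht : 0 < t)
    (g F F' : ℝ → ℝ)
    (hg_cont : ContinuousOn g (Set.Icc 0 t))
    (hg_sym : ∀ s ∈ Set.Icc (0:ℝ) t, g s = g (t - s))
    (hF : ∀ s, F s = ∫ r in (0:ℝ)..t, g r * (H * |s - r| ^ (2*H - 1) * Real.sign (s - r)))
    (hF'_int : IntervalIntegrable F' volume 0 t)
    (hF_ac : ∀ s ∈ Set.Icc (0:ℝ) t, F s - F 0 = ∫ r in (0:ℝ)..s, F' r)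
    (hF_diff : ∀ s ∈ Set.Ioo (0:ℝ) t, HasDerivAt F (F' s) s)
    (heq : ∀ s ∈ Set.Ioo (0:ℝ) t, g s + F' s = 1) :
    (∫ s in (0:ℝ)..t, g s) + 2*H * ∫ τ in (0:ℝ)..t, g τ * τ ^ (2*H - 1) = t :=
  stmt_1_general H t ht g F F' hg_cont hg_sym hF hF'_int hF_ac heq
end

section
/- Let H ∈ (1/2, 1) and c_H = H(2H−1). There exists a constant a_H > 0 such that the function u₀(x) = a_H · x^{1/2−H}(1−x)^{1/2−H} satisfies c_H ∫₀¹ |x−y|^{2H−2} u₀(y) dy = 1 for every x ∈ (0,1). Equivalently, the value of the integral ∫₀¹ |x−y|^{2H−2} y^{1/2−H}(1−y)^{1/2−H} dy is finite, strictly positive, and does not depend on x ∈ (0,1). -/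
open MeasureTheory Real Set

/-!
Write `I(x) = ∫₀¹ |x-y|^{2H-2} y^{1/2-H}(1-y)^{1/2-H} dy`. Splitting `(0,1)` at `x`, the
substitution `y = x(1-t)/(1-xt)` on `(0,x)` and the reflection `y ↦ 1-y` on `(x,1)` give
`I(x) = (x(1-x))^{H-1/2} (F(x) + F(1-x))` with `F(x) = ∫₀¹ t^{2H-2}(1-t)^{1/2-H}/(1-xt) dt`.
Integrating the derivative of `x t^{2H-1}(1-t)^{3/2-H}/(1-xt)`, which vanishes at `t = 0, 1`,
shows `x(1-x)F'(x) = (H-1/2)(F(0) + (2x-1)F(x))`; with this first-order equation the derivative of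
`(x(1-x))^{H-1/2}(F(x) + F(1-x))` vanishes identically on `(0,1)`. Positivity is read off the same
representation, and `a_H = 1/(c_H I(1/2))`.
-/

theorem integrableOn_rpow_mul_one_sub_rpow {a b : ℝ} (ha : -1 < a) (hb : -1 < b) :
    IntegrableOn (fun t : ℝ => t ^ a * (1 - t) ^ b) (Ioo 0 1) := by
  have h := (Complex.betaIntegral_convergent (u := a + 1) (v := b + 1)
    (by simp; linarith) (by simp; linarith)).norm
  rw [intervalIntegrable_iff_integrableOn_Ioo_of_le zero_le_one] at h
  refine h.congr_fun (fun t ht => ?_) measurableSet_Ioo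
  have h1t : 0 < 1 - t := sub_pos.2 ht.2
  simp only [add_sub_cancel_right]
  rw [norm_mul, ← Complex.ofReal_one, ← Complex.ofReal_sub,
    Complex.norm_cpow_eq_rpow_re_of_pos ht.1, Complex.norm_cpow_eq_rpow_re_of_pos h1t]
  simp

theorem min_one_one_sub_le_one_sub_mul {x t : ℝ} (ht : t ∈ Icc 0 1) :
    min 1 (1 - x) ≤ 1 - x * t := by
  have : 1 - x * t = (1 - t) * 1 + t * (1 - x) := by ring
  rw [this]
  nlinarith [min_le_left 1 (1 - x), min_le_right 1 (1 - x), ht.1, ht.2]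

theorem one_sub_mul_pos {x t : ℝ} (hx : x < 1) (ht : t ∈ Icc 0 1) : 0 < 1 - x * t :=
  (lt_min one_pos (sub_pos.2 hx)).trans_le (min_one_one_sub_le_one_sub_mul ht)

theorem integrableOn_rpow_mul_one_sub_rpow_div_pow {a b x : ℝ} (ha : -1 < a) (hb : -1 < b)
    (hx : x < 1) (n : ℕ) :
    IntegrableOn (fun t : ℝ => t ^ a * (1 - t) ^ b / (1 - x * t) ^ n) (Ioo 0 1) := by
  have hm : 0 < min 1 (1 - x) := lt_min one_pos (sub_pos.2 hx)
  refine (integrableOn_rpow_mul_one_sub_rpow ha hb).mul_bdd (c := (min 1 (1 - x))⁻¹ ^ n) ?_ ?_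
  · exact (by fun_prop : Measurable fun t : ℝ => ((1 - x * t) ^ n)⁻¹).aestronglyMeasurable
  · filter_upwards [ae_restrict_mem measurableSet_Ioo] with t ht
    have hle := min_one_one_sub_le_one_sub_mul (x := x) (Ioo_subset_Icc_self ht)
    rw [norm_inv, norm_pow, Real.norm_of_nonneg (hm.le.trans hle), inv_pow]
    exact inv_anti₀ (pow_pos hm n) (pow_le_pow_left₀ hm.le hle n)

noncomputable def betaStieltjes (a b x : ℝ) : ℝ :=
  ∫ t in Ioo (0:ℝ) 1, t ^ a * (1 - t) ^ b / (1 - x * t)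

theorem betaStieltjes_pos {a b x : ℝ} (ha : -1 < a) (hb : -1 < b) (hx : x < 1) :
    0 < betaStieltjes a b x := by
  have h := integrableOn_rpow_mul_one_sub_rpow_div_pow ha hb hx 1
  simp only [pow_one] at h
  rw [betaStieltjes, ← integral_Ioc_eq_integral_Ioo,
    ← intervalIntegral.integral_of_le zero_le_one]
  refine intervalIntegral.intervalIntegral_pos_of_pos_on
    ((intervalIntegrable_iff_integrableOn_Ioo_of_le zero_le_one).2 h) (fun t ht => ?_) one_pos
  have := sub_pos.2 ht.2
  have := one_sub_mul_pos hx (Ioo_subset_Icc_self ht)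
  have := ht.1
  positivity

theorem hasDerivAt_betaStieltjes {a b x : ℝ} (ha : -1 < a) (hb : -1 < b) (hx : x < 1) :
    HasDerivAt (betaStieltjes a b)
      (∫ t in Ioo (0:ℝ) 1, t ^ (a + 1) * (1 - t) ^ b / (1 - x * t) ^ 2) x := by
  obtain ⟨r, hxr, hr⟩ := exists_between hx
  have hm : 0 < min 1 (1 - r) := lt_min one_pos (sub_pos.2 hr)
  have hden : ∀ x' < r, ∀ t ∈ Ioo (0:ℝ) 1, min 1 (1 - r) ≤ 1 - x' * t :=
    fun x' hx' t ht => (min_le_min_left 1 (by linarith)).trans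
      (min_one_one_sub_le_one_sub_mul (Ioo_subset_Icc_self ht))
  have ha' : -1 < a + 1 := by linarith
  refine (hasDerivAt_integral_of_dominated_loc_of_deriv_le
    (μ := volume.restrict (Ioo 0 1)) (F := fun x' t => t ^ a * (1 - t) ^ b / (1 - x' * t))
    (F' := fun x' t => t ^ (a + 1) * (1 - t) ^ b / (1 - x' * t) ^ 2)
    (bound := fun t => t ^ (a + 1) * (1 - t) ^ b / min 1 (1 - r) ^ 2)
    (Iio_mem_nhds hxr) ?_ ?_ ?_ ?_ ?_ ?_).2
  · filter_upwards [Iio_mem_nhds hx] with x' hx'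
    simpa using (integrableOn_rpow_mul_one_sub_rpow_div_pow ha hb hx' 1).aestronglyMeasurable
  · simpa using (integrableOn_rpow_mul_one_sub_rpow_div_pow ha hb hx 1).integrable
  · exact (integrableOn_rpow_mul_one_sub_rpow_div_pow ha' hb hx 2).aestronglyMeasurable
  · filter_upwards [ae_restrict_mem measurableSet_Ioo] with t ht x' hx'
    have hw : 0 ≤ t ^ (a + 1) * (1 - t) ^ b :=
      mul_nonneg (rpow_nonneg ht.1.le _) (rpow_nonneg (sub_pos.2 ht.2).le _)
    have hle := hden x' hx' t ht
    rw [Real.norm_of_nonneg (div_nonneg hw (sq_nonneg _))]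
    exact div_le_div_of_nonneg_left hw (pow_pos hm 2) (pow_le_pow_left₀ hm.le hle 2)
  · exact (integrableOn_rpow_mul_one_sub_rpow ha' hb).div_const _
  · filter_upwards [ae_restrict_mem measurableSet_Ioo] with t ht x' hx'
    have hne : 1 - x' * t ≠ 0 := (hm.trans_le (hden x' hx' t ht)).ne'
    have hd : HasDerivAt (fun y : ℝ => 1 - y * t) (-t) x' := by
      simpa using ((hasDerivAt_id x').mul_const t).const_sub 1
    have h := (hd.inv hne).const_mul (t ^ a * (1 - t) ^ b)
    simp only [Pi.inv_apply, ← div_eq_mul_inv] at h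
    refine h.congr_deriv ?_
    rw [rpow_add_one ht.1.ne']
    field_simp

theorem betaStieltjes_ode {a b x : ℝ} (ha : -1 < a) (hb : -1 < b) (hx : x < 1) :
    x * (1 - x) * ∫ t in Ioo (0:ℝ) 1, t ^ (a + 1) * (1 - t) ^ b / (1 - x * t) ^ 2 =
      (a + b + 1) * betaStieltjes a b 0 + ((a + 1) * x - (a + b + 1)) * betaStieltjes a b x := by
  set ψ : ℝ → ℝ := fun t => x * t ^ (a + 1) * (1 - t) ^ (b + 1) / (1 - x * t)
  set ψ' : ℝ → ℝ := fun t => (a + b + 1) * (t ^ a * (1 - t) ^ b / (1 - 0 * t)) +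
      ((a + 1) * x - (a + b + 1)) * (t ^ a * (1 - t) ^ b / (1 - x * t)) -
      x * (1 - x) * (t ^ (a + 1) * (1 - t) ^ b / (1 - x * t) ^ 2)
  have hderiv : ∀ t ∈ Ioo (0:ℝ) 1, HasDerivAt ψ (ψ' t) t := by
    intro t ht
    have h1t : 0 < 1 - t := sub_pos.2 ht.2
    have hne := (one_sub_mul_pos hx (Ioo_subset_Icc_self ht)).ne'
    have h := ((((hasDerivAt_rpow_const (p := a + 1) (Or.inl ht.1.ne')).const_mul x).mul
      (((hasDerivAt_id t).const_sub 1).rpow_const (p := b + 1) (Or.inl h1t.ne'))).div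
      (((hasDerivAt_id t).const_mul x).const_sub 1) hne)
    refine h.congr_deriv ?_
    simp only [ψ', id, Pi.mul_apply, add_sub_cancel_right, rpow_add_one ht.1.ne',
      rpow_add_one h1t.ne']
    field_simp
    ring
  have hcont : ContinuousOn ψ (Icc 0 1) :=
    ContinuousOn.div (by fun_prop (disch := linarith)) (by fun_prop) fun t ht =>
      (one_sub_mul_pos hx ht).ne'
  have hF0 := integrableOn_rpow_mul_one_sub_rpow_div_pow ha hb (by norm_num : (0:ℝ) < 1) 1
  have hF := integrableOn_rpow_mul_one_sub_rpow_div_pow ha hb hx 1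
  have hD := integrableOn_rpow_mul_one_sub_rpow_div_pow (by linarith : -1 < a + 1) hb hx 2
  simp only [pow_one] at hF0 hF
  have hψ'_int : IntegrableOn ψ' (Ioo 0 1) :=
    ((hF0.const_mul _).add (hF.const_mul _)).sub (hD.const_mul _)
  have hzero : ∫ t in Ioo (0:ℝ) 1, ψ' t = 0 := by
    rw [← integral_Ioc_eq_integral_Ioo, ← intervalIntegral.integral_of_le zero_le_one,
      intervalIntegral.integral_eq_sub_of_hasDeriv_right_of_le zero_le_one hcont
        (fun t ht => (hderiv t ht).hasDerivWithinAt)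
        ((intervalIntegrable_iff_integrableOn_Ioo_of_le zero_le_one).2 hψ'_int)]
    simp [ψ, zero_rpow (by linarith : a + 1 ≠ 0), zero_rpow (by linarith : b + 1 ≠ 0)]
  have hsplit : (a + b + 1) * betaStieltjes a b 0 + ((a + 1) * x - (a + b + 1)) *
      betaStieltjes a b x - x * (1 - x) *
        ∫ t in Ioo (0:ℝ) 1, t ^ (a + 1) * (1 - t) ^ b / (1 - x * t) ^ 2 =
      ∫ t in Ioo (0:ℝ) 1, ψ' t := by
    rw [betaStieltjes, betaStieltjes, ← integral_const_mul, ← integral_const_mul,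
      ← integral_const_mul, ← integral_add (hF0.const_mul _) (hF.const_mul _)]
    exact (integral_sub ((hF0.const_mul _).add (hF.const_mul _)) (hD.const_mul _)).symm
  linarith

theorem rpow_jacobian_identity {a b s u c p q r : ℝ} (ha : 0 < a) (hb : 0 < b) (hs : 0 < s)
    (hu : 0 < u) (hc : 0 < c) :
    a * b / c ^ 2 * ((a * b * s / c) ^ p * ((a * u / c) ^ q * (b / c) ^ r)) =
      a ^ (p + q + 1) * b ^ (p + r + 1) * (s ^ p * u ^ q * c ^ (-(p + q + r + 2))) := by
  rw [rpow_neg hc.le, rpow_add hc, rpow_add hc, rpow_add hc, rpow_add ha, rpow_add ha,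
    rpow_add hb, rpow_add hb, rpow_one, rpow_one, rpow_two, div_rpow (by positivity) hc.le,
    div_rpow (by positivity) hc.le, div_rpow hb.le hc.le, mul_rpow (by positivity) hs.le,
    mul_rpow ha.le hb.le, mul_rpow ha.le hu.le]
  field_simp

section EulerSubst

variable {x : ℝ}

noncomputable def eulerSubst (x t : ℝ) : ℝ := x * (1 - t) / (1 - x * t)

theorem hasDerivAt_eulerSubst (hx : x ∈ Ioo 0 1) {t : ℝ} (ht : t ∈ Ioo 0 1) :
    HasDerivAt (eulerSubst x) (-(x * (1 - x) / (1 - x * t) ^ 2)) t := by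
  have h := (((hasDerivAt_id t).const_sub 1).const_mul x).div
    (((hasDerivAt_id t).const_mul x).const_sub 1)
    (one_sub_mul_pos hx.2 (Ioo_subset_Icc_self ht)).ne'
  refine h.congr_deriv ?_
  simp only [id]
  ring

theorem injOn_eulerSubst (hx : x ∈ Ioo 0 1) : InjOn (eulerSubst x) (Ioo 0 1) := by
  intro t₁ ht₁ t₂ ht₂ h
  have h₁ := (one_sub_mul_pos hx.2 (Ioo_subset_Icc_self ht₁)).ne'
  have h₂ := (one_sub_mul_pos hx.2 (Ioo_subset_Icc_self ht₂)).ne'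
  rw [eulerSubst, eulerSubst, div_eq_div_iff h₁ h₂] at h
  have : x * (1 - x) * (t₂ - t₁) = 0 := by linear_combination h
  have hx' : x * (1 - x) ≠ 0 := (mul_pos hx.1 (sub_pos.2 hx.2)).ne'
  linarith [(mul_eq_zero.1 this).resolve_left hx']

theorem image_eulerSubst (hx : x ∈ Ioo 0 1) : eulerSubst x '' Ioo 0 1 = Ioo 0 x := by
  obtain ⟨hx₀, hx₁⟩ := hx
  refine Subset.antisymm ?_ fun y hy => ?_
  · rintro _ ⟨t, ht, rfl⟩
    have hc := one_sub_mul_pos hx₁ (Ioo_subset_Icc_self ht)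
    refine ⟨div_pos (mul_pos hx₀ (sub_pos.2 ht.2)) hc, (div_lt_iff₀ hc).2 ?_⟩
    nlinarith [mul_pos (mul_pos hx₀ ht.1) (sub_pos.2 hx₁)]
  · have hy₁ : 0 < 1 - y := by linarith [hy.2]
    refine ⟨(x - y) / (x * (1 - y)), ⟨div_pos (by linarith [hy.2]) (mul_pos hx₀ hy₁),
      (div_lt_one (mul_pos hx₀ hy₁)).2 (by nlinarith [hy.1])⟩, ?_⟩
    rw [eulerSubst]
    field_simp
    rw [div_eq_iff (by linarith : (0:ℝ) < 1 - y - (x - y)).ne']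
    ring

theorem eulerSubst_jacobian (hx : x ∈ Ioo 0 1) {t : ℝ} (ht : t ∈ Ioo 0 1) (p q r : ℝ) :
    |-(x * (1 - x) / (1 - x * t) ^ 2)| •
        ((x - eulerSubst x t) ^ p * (eulerSubst x t ^ q * (1 - eulerSubst x t) ^ r)) =
      x ^ (p + q + 1) * (1 - x) ^ (p + r + 1) *
        (t ^ p * (1 - t) ^ q * (1 - x * t) ^ (-(p + q + r + 2))) := by
  have hc := one_sub_mul_pos hx.2 (Ioo_subset_Icc_self ht)
  have h1x := sub_pos.2 hx.2
  have hsub : x - eulerSubst x t = x * (1 - x) * t / (1 - x * t) := by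
    rw [eulerSubst]; field_simp; ring
  have hone : 1 - eulerSubst x t = (1 - x) / (1 - x * t) := by
    rw [eulerSubst]; field_simp; ring
  rw [smul_eq_mul, abs_neg, abs_of_pos (div_pos (mul_pos hx.1 h1x) (pow_pos hc 2)), hsub, hone,
    eulerSubst]
  exact rpow_jacobian_identity hx.1 h1x ht.1 (sub_pos.2 ht.2) hc

theorem integrableOn_Ioo_sub_rpow_mul_iff (hx : x ∈ Ioo 0 1) (p q r : ℝ) :
    IntegrableOn (fun y => (x - y) ^ p * (y ^ q * (1 - y) ^ r)) (Ioo 0 x) ↔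
      IntegrableOn (fun t => t ^ p * (1 - t) ^ q * (1 - x * t) ^ (-(p + q + r + 2))) (Ioo 0 1) := by
  rw [← image_eulerSubst hx, integrableOn_image_iff_integrableOn_abs_deriv_smul measurableSet_Ioo
    (fun t ht => (hasDerivAt_eulerSubst hx ht).hasDerivWithinAt) (injOn_eulerSubst hx),
    integrableOn_congr_fun (fun t ht => eulerSubst_jacobian hx ht p q r) measurableSet_Ioo]
  exact integrable_const_mul_iff (IsUnit.mk0 _ (by
    have := sub_pos.2 hx.2; have := hx.1; positivity)) _

theorem integral_Ioo_sub_rpow_mul (hx : x ∈ Ioo 0 1) (p q r : ℝ) :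
    ∫ y in Ioo 0 x, (x - y) ^ p * (y ^ q * (1 - y) ^ r) =
      x ^ (p + q + 1) * (1 - x) ^ (p + r + 1) *
        ∫ t in Ioo 0 1, t ^ p * (1 - t) ^ q * (1 - x * t) ^ (-(p + q + r + 2)) := by
  rw [← image_eulerSubst hx, integral_image_eq_integral_abs_deriv_smul measurableSet_Ioo
    (fun t ht => (hasDerivAt_eulerSubst hx ht).hasDerivWithinAt) (injOn_eulerSubst hx),
    setIntegral_congr_fun measurableSet_Ioo fun t ht => eulerSubst_jacobian hx ht p q r,
    integral_const_mul]

end EulerSubst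

theorem integrableOn_Ioo_comp_sub_left_iff {E : Type*} [NormedAddCommGroup E] [NormedSpace ℝ E]
    (f : ℝ → E) (a b c : ℝ) :
    IntegrableOn (fun y => f (c - y)) (Ioo a b) ↔ IntegrableOn f (Ioo (c - b) (c - a)) := by
  rw [← image_const_sub_Ioo, integrableOn_image_iff_integrableOn_abs_deriv_smul measurableSet_Ioo
    (fun y _ => ((hasDerivAt_id' y).const_sub c).hasDerivWithinAt) (sub_right_injective.injOn)]
  simp

theorem setIntegral_Ioo_comp_sub_left {E : Type*} [NormedAddCommGroup E] [NormedSpace ℝ E]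
    (f : ℝ → E) (a b c : ℝ) :
    ∫ y in Ioo a b, f (c - y) = ∫ y in Ioo (c - b) (c - a), f y := by
  rw [← image_const_sub_Ioo, integral_image_eq_integral_abs_deriv_smul measurableSet_Ioo
    (fun y _ => ((hasDerivAt_id' y).const_sub c).hasDerivWithinAt) (sub_right_injective.injOn)]
  simp

noncomputable def weightedRieszKernel (H x y : ℝ) : ℝ :=
  |x - y| ^ (2 * H - 2) * (y ^ (1 / 2 - H) * (1 - y) ^ (1 / 2 - H))

section WeightedRieszKernel

variable {H x : ℝ}

theorem weightedRieszKernel_one_sub (H x y : ℝ) :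
    weightedRieszKernel H x (1 - y) = weightedRieszKernel H (1 - x) y := by
  rw [weightedRieszKernel, weightedRieszKernel, show x - (1 - y) = -(1 - x - y) by ring, abs_neg,
    sub_sub_cancel, mul_comm ((1 - y) ^ _)]

theorem eqOn_weightedRieszKernel_Ioo (H : ℝ) :
    EqOn (weightedRieszKernel H x)
      (fun y => (x - y) ^ (2 * H - 2) * (y ^ (1 / 2 - H) * (1 - y) ^ (1 / 2 - H))) (Ioo 0 x) :=
  fun y hy => by rw [weightedRieszKernel, abs_of_pos (sub_pos.2 hy.2)]

theorem eulerIntegrand_eq_betaStieltjes_integrand (H x t : ℝ) :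
    t ^ (2 * H - 2) * (1 - t) ^ (1 / 2 - H) *
        (1 - x * t) ^ (-((2 * H - 2) + (1 / 2 - H) + (1 / 2 - H) + 2)) =
      t ^ (2 * H - 2) * (1 - t) ^ (1 / 2 - H) / (1 - x * t) := by
  rw [show -((2 * H - 2) + (1 / 2 - H) + (1 / 2 - H) + 2) = -1 by ring, rpow_neg_one]
  rfl

theorem integrableOn_weightedRieszKernel_Ioo (hH : 1 / 2 < H) (hH' : H < 3 / 2)
    (hx : x ∈ Ioo 0 1) : IntegrableOn (weightedRieszKernel H x) (Ioo 0 x) := by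
  rw [integrableOn_congr_fun (eqOn_weightedRieszKernel_Ioo H) measurableSet_Ioo,
    integrableOn_Ioo_sub_rpow_mul_iff hx]
  simp only [eulerIntegrand_eq_betaStieltjes_integrand]
  simpa using integrableOn_rpow_mul_one_sub_rpow_div_pow (by linarith : -1 < 2 * H - 2)
    (by linarith : -1 < 1 / 2 - H) hx.2 1

theorem setIntegral_weightedRieszKernel_Ioo (H : ℝ) (hx : x ∈ Ioo 0 1) :
    ∫ y in Ioo 0 x, weightedRieszKernel H x y =
      (x * (1 - x)) ^ (H - 1 / 2) * betaStieltjes (2 * H - 2) (1 / 2 - H) x := by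
  rw [setIntegral_congr_fun measurableSet_Ioo (eqOn_weightedRieszKernel_Ioo H),
    integral_Ioo_sub_rpow_mul hx]
  simp only [eulerIntegrand_eq_betaStieltjes_integrand]
  rw [mul_rpow hx.1.le (sub_pos.2 hx.2).le, betaStieltjes]
  ring_nf

theorem integrableOn_weightedRieszKernel (hH : 1 / 2 < H) (hH' : H < 3 / 2)
    (hx : x ∈ Ioo 0 1) : IntegrableOn (weightedRieszKernel H x) (Ioo 0 1) := by
  have hx' : 1 - x ∈ Ioo 0 1 := ⟨sub_pos.2 hx.2, sub_lt_self 1 hx.1⟩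
  have hright : IntegrableOn (weightedRieszKernel H x) (Ioo x 1) := by
    have h := integrableOn_weightedRieszKernel_Ioo hH hH' hx'
    rw [← funext (weightedRieszKernel_one_sub H x), integrableOn_Ioo_comp_sub_left_iff] at h
    simpa using h
  rw [← Ioo_union_Ico_eq_Ioo hx.1 hx.2.le, integrableOn_union,
    integrableOn_Ico_iff_integrableOn_Ioo]
  exact ⟨integrableOn_weightedRieszKernel_Ioo hH hH' hx, hright⟩

theorem integral_weightedRieszKernel (hH : 1 / 2 < H) (hH' : H < 3 / 2) (hx : x ∈ Ioo 0 1) :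
    ∫ y in Ioo 0 1, weightedRieszKernel H x y =
      (x * (1 - x)) ^ (H - 1 / 2) * (betaStieltjes (2 * H - 2) (1 / 2 - H) x +
        betaStieltjes (2 * H - 2) (1 / 2 - H) (1 - x)) := by
  have hx' : 1 - x ∈ Ioo 0 1 := ⟨sub_pos.2 hx.2, sub_lt_self 1 hx.1⟩
  have hright : ∫ y in Ioo x 1, weightedRieszKernel H x y =
      (x * (1 - x)) ^ (H - 1 / 2) * betaStieltjes (2 * H - 2) (1 / 2 - H) (1 - x) := by
    have h := setIntegral_weightedRieszKernel_Ioo H hx'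
    simp only [← weightedRieszKernel_one_sub, setIntegral_Ioo_comp_sub_left, sub_sub_cancel,
      sub_zero] at h
    rw [h, mul_comm x]
  have hint := integrableOn_weightedRieszKernel hH hH' hx
  rw [← Ioo_union_Ico_eq_Ioo hx.1 hx.2.le] at hint ⊢
  rw [setIntegral_union ((Iio_disjoint_Ici le_rfl).mono Ioo_subset_Iio_self Ico_subset_Ici_self)
    measurableSet_Ico (hint.mono_set subset_union_left) (hint.mono_set subset_union_right),
    integral_Ico_eq_integral_Ioo, setIntegral_weightedRieszKernel_Ioo H hx, hright, mul_add]

theorem hasDerivAt_symmetrized_betaStieltjes (hH : 1 / 2 < H) (hH' : H < 3 / 2)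
    (hx : x ∈ Ioo 0 1) :
    HasDerivAt (fun z => (z * (1 - z)) ^ (H - 1 / 2) * (betaStieltjes (2 * H - 2) (1 / 2 - H) z +
      betaStieltjes (2 * H - 2) (1 / 2 - H) (1 - z))) 0 x := by
  have ha : -1 < 2 * H - 2 := by linarith
  have hb : -1 < 1 / 2 - H := by linarith
  have hm : x * (1 - x) ≠ 0 := (mul_pos hx.1 (sub_pos.2 hx.2)).ne'
  have hF := hasDerivAt_betaStieltjes ha hb hx.2
  have hF' := (hasDerivAt_betaStieltjes ha hb (sub_lt_self 1 hx.1)).comp x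
    ((hasDerivAt_id x).const_sub 1)
  have hpow := ((hasDerivAt_id x).mul ((hasDerivAt_id x).const_sub 1)).rpow_const
    (p := H - 1 / 2) (Or.inl hm)
  have hode := betaStieltjes_ode ha hb hx.2
  have hode' := betaStieltjes_ode ha hb (sub_lt_self 1 hx.1)
  have hsucc : (x * (1 - x)) ^ (H - 1 / 2 - 1) * (x * (1 - x)) = (x * (1 - x)) ^ (H - 1 / 2) := by
    rw [← rpow_add_one hm, sub_add_cancel]
  refine (hpow.mul (hF.add hF')).congr_deriv ?_
  simp only [Pi.mul_apply, Pi.add_apply, Function.comp_apply, id]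
  set D₁ := ∫ t in Ioo (0:ℝ) 1, t ^ (2 * H - 2 + 1) * (1 - t) ^ (1 / 2 - H) / (1 - x * t) ^ 2
  set D₂ := ∫ t in Ioo (0:ℝ) 1,
    t ^ (2 * H - 2 + 1) * (1 - t) ^ (1 / 2 - H) / (1 - (1 - x) * t) ^ 2
  set P := (x * (1 - x)) ^ (H - 1 / 2 - 1)
  linear_combination (D₂ - D₁) * hsucc + P * hode - P * hode'

theorem integral_weightedRieszKernel_eq (hH : 1 / 2 < H) (hH' : H < 3 / 2) {x₁ x₂ : ℝ}
    (hx₁ : x₁ ∈ Ioo 0 1) (hx₂ : x₂ ∈ Ioo 0 1) :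
    ∫ y in Ioo 0 1, weightedRieszKernel H x₁ y =
      ∫ y in Ioo 0 1, weightedRieszKernel H x₂ y := by
  rw [integral_weightedRieszKernel hH hH' hx₁, integral_weightedRieszKernel hH hH' hx₂]
  have hG := fun z (hz : z ∈ Ioo (0:ℝ) 1) => hasDerivAt_symmetrized_betaStieltjes hH hH' hz
  exact isOpen_Ioo.is_const_of_deriv_eq_zero isPreconnected_Ioo
    (fun z hz => (hG z hz).differentiableAt.differentiableWithinAt)
    (fun z hz => (hG z hz).deriv) hx₁ hx₂

theorem integral_weightedRieszKernel_pos (hH : 1 / 2 < H) (hH' : H < 3 / 2) (hx : x ∈ Ioo 0 1) :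
    0 < ∫ y in Ioo 0 1, weightedRieszKernel H x y := by
  have ha : -1 < 2 * H - 2 := by linarith
  have hb : -1 < 1 / 2 - H := by linarith
  rw [integral_weightedRieszKernel hH hH' hx]
  have := betaStieltjes_pos ha hb hx.2
  have := betaStieltjes_pos ha hb (sub_lt_self 1 hx.1)
  have := mul_pos hx.1 (sub_pos.2 hx.2)
  positivity

end WeightedRieszKernel

/-- the first-kind equation on `(0,1)` has the explicit solution
`u₀(x) = a_H x^{1/2−H}(1−x)^{1/2−H}`: there is a constant `a_H > 0` such that
`c_H ∫₀¹ |x−y|^{2H−2} u₀(y) dy = 1` for all `x ∈ (0,1)`; equivalently, the integral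
`∫₀¹ |x−y|^{2H−2} y^{1/2−H}(1−y)^{1/2−H} dy` is finite, strictly positive and
independent of `x ∈ (0,1)`. -/
theorem stmt_3 (H : ℝ) (hH : H ∈ Set.Ioo (1/2 : ℝ) 1) :
    (∃ a : ℝ, 0 < a ∧ ∀ x ∈ Set.Ioo (0:ℝ) 1,
      (H * (2*H - 1)) *
        ∫ y in Set.Ioo (0:ℝ) 1,
          |x - y| ^ (2*H - 2) * (a * y ^ (1/2 - H) * (1 - y) ^ (1/2 - H)) = 1)
    ∧ (∀ x ∈ Set.Ioo (0:ℝ) 1,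
        IntegrableOn
          (fun y => |x - y| ^ (2*H - 2) * (y ^ (1/2 - H) * (1 - y) ^ (1/2 - H)))
          (Set.Ioo 0 1))
    ∧ (∀ x ∈ Set.Ioo (0:ℝ) 1,
        0 < ∫ y in Set.Ioo (0:ℝ) 1,
              |x - y| ^ (2*H - 2) * (y ^ (1/2 - H) * (1 - y) ^ (1/2 - H)))
    ∧ (∀ x₁ ∈ Set.Ioo (0:ℝ) 1, ∀ x₂ ∈ Set.Ioo (0:ℝ) 1,
        (∫ y in Set.Ioo (0:ℝ) 1,
            |x₁ - y| ^ (2*H - 2) * (y ^ (1/2 - H) * (1 - y) ^ (1/2 - H)))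
        = ∫ y in Set.Ioo (0:ℝ) 1,
            |x₂ - y| ^ (2*H - 2) * (y ^ (1/2 - H) * (1 - y) ^ (1/2 - H))) := by
  obtain ⟨hH₁, hH₂⟩ := hH
  have hH₂' : H < 3 / 2 := by linarith
  have hhalf : (1 / 2 : ℝ) ∈ Ioo 0 1 := by norm_num
  obtain ⟨C, hC, hCdef⟩ :
      ∃ C, 0 < C ∧ ∫ y in Ioo 0 1, weightedRieszKernel H (1 / 2) y = C :=
    ⟨_, integral_weightedRieszKernel_pos hH₁ hH₂' hhalf, rfl⟩
  have hcH : 0 < H * (2 * H - 1) := mul_pos (by linarith) (by linarith)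
  refine ⟨⟨(H * (2 * H - 1) * C)⁻¹, by positivity, fun x hx => ?_⟩,
    fun x hx => integrableOn_weightedRieszKernel hH₁ hH₂' hx,
    fun x hx => integral_weightedRieszKernel_pos hH₁ hH₂' hx,
    fun x₁ hx₁ x₂ hx₂ => integral_weightedRieszKernel_eq hH₁ hH₂' hx₁ hx₂⟩
  simp_rw [mul_assoc _ (_ ^ _) (_ ^ _), mul_left_comm _ (H * (2 * H - 1) * C)⁻¹,
    integral_const_mul]
  change H * (2 * H - 1) *
    ((H * (2 * H - 1) * C)⁻¹ * ∫ y in Ioo 0 1, weightedRieszKernel H x y) = 1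
  rw [integral_weightedRieszKernel_eq hH₁ hH₂' hx hhalf, hCdef, mul_inv, mul_assoc _ C⁻¹,
    inv_mul_cancel₀ hC.ne', mul_one, mul_inv_cancel₀ hcH.ne']
end

section
/- Let H ∈ (1/2, 1). Then the integral I_H = ∫₀^∞ y^{H−3/2}/(y^{2H−1}+1) dy is finite and strictly positive, and lim_{ε→0⁺} √ε · Σ_{n=1}^∞ n^{−1/2−H}/(ε + n^{1−2H}) = I_H. -/
/-!
Substituting `δ = ε ^ (2H - 1)⁻¹` turns `√ε · Σₙ n^{-1/2-H} / (ε + n^{1-2H})` exactly into the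
Riemann sum `δ · Σₙ f(nδ)` of `f y = y^{H-3/2} / (y^{2H-1} + 1)`. This `f` is positive and
decreasing on `(0, ∞)`, integrable there because it is at most `y^{H-3/2}` near `0` and
`y^{-1/2-H}` near `∞`. For such an `f` the integral test squeezes the Riemann sum between
`∫_δ^∞ f` and `∫_0^∞ f`, and `∫_δ^∞ f → ∫_0^∞ f` as `δ → 0⁺`.
-/

open MeasureTheory Real Set Filter Topology

theorem tendsto_setIntegral_Ioi_nhdsGT {E : Type*} [NormedAddCommGroup E] [NormedSpace ℝ E]
    {f : ℝ → E} {a : ℝ} (hf : IntegrableOn f (Ioi a)) :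
    Tendsto (fun b => ∫ x in Ioi b, f x) (𝓝[>] a) (𝓝 (∫ x in Ioi a, f x)) := by
  have hprim : Tendsto (fun b => ∫ x in a..b, f x) (𝓝[>] a) (𝓝 0) := by
    have hcont := intervalIntegral.continuousWithinAt_primitive (f := f) (a := a) (μ := volume)
      (b₀ := a) (b₁ := a) (b₂ := a + 1) (measure_singleton a) (by
        rw [min_self, max_eq_right (by linarith), intervalIntegrable_iff_integrableOn_Ioc_of_le
          (by linarith)]
        exact hf.mono_set Ioc_subset_Ioi_self)
    simpa using (hcont.mono_of_mem_nhdsWithin (Icc_mem_nhdsGT (by linarith))).tendsto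
  have hsub := tendsto_const_nhds (x := ∫ x in Ioi a, f x) |>.sub hprim
  rw [sub_zero] at hsub
  refine hsub.congr' ?_
  filter_upwards [self_mem_nhdsWithin] with b hb
  rw [← intervalIntegral.integral_Ioi_sub_Ioi hf (le_of_lt hb), sub_sub_cancel]

namespace AntitoneOn

variable {f : ℝ → ℝ} {δ : ℝ}

theorem comp_mul_right_Ici_one (anti : AntitoneOn f (Ioi 0)) (hδ : 0 < δ) :
    AntitoneOn (fun x => f (x * δ)) (Ici ((1 : ℕ) : ℝ)) := by
  intro x hx y hy hxy
  simp only [Nat.cast_one, mem_Ici] at hx hy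
  exact anti (by simp only [mem_Ioi]; positivity) (by simp only [mem_Ioi]; positivity)
    (mul_le_mul_of_nonneg_right hxy hδ.le)

theorem integrableOn_comp_mul_right_Ioi_one (integrable : IntegrableOn f (Ioi 0)) (hδ : 0 < δ) :
    IntegrableOn (fun x => f (x * δ)) (Ioi ((1 : ℕ) : ℝ)) := by
  rw [integrableOn_Ioi_comp_mul_right_iff f _ hδ]
  exact integrable.mono_set (Ioi_subset_Ioi (by simp [hδ.le]))

theorem summable_comp_mul_right (anti : AntitoneOn f (Ioi 0)) (integrable : IntegrableOn f (Ioi 0))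
    (nonneg : ∀ x ∈ Ioi 0, 0 ≤ f x) (hδ : 0 < δ) : Summable fun n : ℕ => f (n * δ) :=
  (anti.comp_mul_right_Ici_one hδ).summable_of_integrableOn_Ioi
    (integrableOn_comp_mul_right_Ioi_one integrable hδ)
    fun x hx => nonneg _ (by simp only [Nat.cast_one, mem_Ioi] at hx ⊢; positivity)

theorem integral_Ioi_le_mul_tsum (anti : AntitoneOn f (Ioi 0)) (integrable : IntegrableOn f (Ioi 0))
    (nonneg : ∀ x ∈ Ioi 0, 0 ≤ f x) (hδ : 0 < δ) :
    ∫ x in Ioi δ, f x ≤ δ * ∑' n : ℕ, f ((n + 1 : ℕ) * δ) := by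
  have h := (anti.comp_mul_right_Ici_one hδ).integral_le_tsum_comp_add 1
    (anti.summable_comp_mul_right integrable nonneg hδ)
    fun x hx => nonneg _ (by simp only [Nat.cast_one, mem_Ioi] at hx ⊢; positivity)
  rw [← one_mul δ, ← integral_comp_mul_right_Ioi' f 1 hδ, one_mul, smul_eq_mul]
  exact mul_le_mul_of_nonneg_left (by exact_mod_cast h) hδ.le

theorem mul_le_integral_Ioc_zero (anti : AntitoneOn f (Ioi 0)) (integrable : IntegrableOn f (Ioi 0))
    (hδ : 0 < δ) : δ * f δ ≤ ∫ x in Ioc 0 δ, f x := by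
  have h := setIntegral_ge_of_const_le_real (c := f δ) (μ := volume) measurableSet_Ioc
    measure_Ioc_lt_top.ne (fun x hx => anti hx.1 hδ hx.2) (integrable.mono_set Ioc_subset_Ioi_self)
  rwa [Real.volume_real_Ioc_of_le hδ.le, sub_zero, mul_comm] at h

theorem mul_tsum_le_integral_Ioi (anti : AntitoneOn f (Ioi 0)) (integrable : IntegrableOn f (Ioi 0))
    (nonneg : ∀ x ∈ Ioi 0, 0 ≤ f x) (hδ : 0 < δ) :
    δ * ∑' n : ℕ, f ((n + 1 : ℕ) * δ) ≤ ∫ x in Ioi 0, f x := by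
  have hsum := (summable_nat_add_iff 1).mpr (anti.summable_comp_mul_right integrable nonneg hδ)
  -- `f` need not be antitone at `0`, so the first term is compared with `∫_0^δ f` separately
  have htail := (anti.comp_mul_right_Ici_one hδ).tsum_comp_add_le_integral 1
    (integrableOn_comp_mul_right_Ioi_one integrable hδ)
    fun x hx => nonneg _ (by simp only [Nat.cast_one, mem_Ioi] at hx ⊢; positivity)
  rw [hsum.tsum_eq_zero_add, ← intervalIntegral.integral_interval_add_Ioi integrable
    (integrable.mono_set (Ioi_subset_Ioi hδ.le)), intervalIntegral.integral_of_le hδ.le]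
  have hscale : δ * ∑' n : ℕ, f ((n + 1 + 1 : ℕ) * δ) ≤ ∫ x in Ioi δ, f x := by
    rw [← one_mul δ, ← integral_comp_mul_right_Ioi' f 1 hδ, one_mul, smul_eq_mul]
    exact mul_le_mul_of_nonneg_left (by exact_mod_cast htail) hδ.le
  have hfirst := anti.mul_le_integral_Ioc_zero integrable hδ
  simp only [zero_add, Nat.cast_one, one_mul]
  rw [mul_add]
  exact add_le_add hfirst hscale

theorem tendsto_mul_tsum_pnat_nhdsGT_zero (anti : AntitoneOn f (Ioi 0))
    (integrable : IntegrableOn f (Ioi 0)) (nonneg : ∀ x ∈ Ioi 0, 0 ≤ f x) :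
    Tendsto (fun δ => δ * ∑' n : ℕ+, f (n * δ)) (𝓝[>] 0) (𝓝 (∫ x in Ioi 0, f x)) := by
  refine tendsto_of_tendsto_of_tendsto_of_le_of_le' (tendsto_setIntegral_Ioi_nhdsGT integrable)
    tendsto_const_nhds ?_ ?_ <;>
  filter_upwards [self_mem_nhdsWithin] with δ hδ <;>
  rw [tsum_pnat_eq_tsum_succ (f := fun n : ℕ => f (n * δ))]
  · exact anti.integral_Ioi_le_mul_tsum integrable nonneg hδ
  · exact anti.mul_tsum_le_integral_Ioi integrable nonneg hδ

end AntitoneOn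

theorem tendsto_rpow_nhdsGT_zero {p : ℝ} (hp : 0 < p) :
    Tendsto (fun x : ℝ => x ^ p) (𝓝[>] 0) (𝓝[>] 0) := by
  refine tendsto_nhdsWithin_iff.mpr ⟨?_, ?_⟩
  · simpa [zero_rpow hp.ne'] using
      (continuousAt_rpow_const 0 p (Or.inr hp.le)).tendsto.mono_left nhdsWithin_le_nhds
  · filter_upwards [self_mem_nhdsWithin] with x hx using rpow_pos_of_pos hx p

noncomputable def hurstIntegrand (H y : ℝ) : ℝ := y ^ (H - 3/2) / (y ^ (2*H - 1) + 1)

section HurstIntegrand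

variable {H : ℝ}

theorem hurstIntegrand_pos {y : ℝ} (hy : 0 < y) : 0 < hurstIntegrand H y := by
  unfold hurstIntegrand
  positivity

theorem antitoneOn_hurstIntegrand (h₁ : 1/2 ≤ H) (h₂ : H ≤ 3/2) :
    AntitoneOn (hurstIntegrand H) (Ioi 0) := by
  intro x hx y hy hxy
  have hx : 0 < x := hx
  unfold hurstIntegrand
  gcongr ?_ / (?_ + 1)
  · exact rpow_le_rpow_of_nonpos hx hxy (by linarith)
  · exact rpow_le_rpow hx.le hxy (by linarith)

theorem continuousOn_hurstIntegrand : ContinuousOn (hurstIntegrand H) (Ioi 0) := by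
  unfold hurstIntegrand
  refine ContinuousOn.div ?_ ?_ fun y hy => ?_
  · exact continuousOn_id.rpow_const fun y hy => Or.inl (ne_of_gt hy)
  · exact (continuousOn_id.rpow_const fun y hy => Or.inl (ne_of_gt hy)).add continuousOn_const
  · have : (0 : ℝ) < y := hy
    positivity

theorem hurstIntegrand_le_rpow_sub_three_halves {y : ℝ} (hy : 0 < y) :
    hurstIntegrand H y ≤ y ^ (H - 3/2) :=
  div_le_self (by positivity) (by linarith [rpow_nonneg hy.le (2*H - 1)])

theorem hurstIntegrand_le_rpow_neg_half_sub {y : ℝ} (hy : 0 < y) :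
    hurstIntegrand H y ≤ y ^ (-1/2 - H) := by
  have h : y ^ (-1/2 - H) = y ^ (H - 3/2) / y ^ (2*H - 1) := by
    rw [← rpow_sub hy]; ring_nf
  rw [h]
  exact div_le_div_of_nonneg_left (by positivity) (by positivity) (by linarith)

theorem integrableOn_hurstIntegrand (hH : 1/2 < H) : IntegrableOn (hurstIntegrand H) (Ioi 0) := by
  have hmeas (s : Set ℝ) (hs : MeasurableSet s) (hsub : s ⊆ Ioi 0) :
      AEStronglyMeasurable (hurstIntegrand H) (volume.restrict s) :=
    (continuousOn_hurstIntegrand.mono hsub).aestronglyMeasurable hs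
  have hnorm {y : ℝ} (hy : 0 < y) : ‖hurstIntegrand H y‖ = hurstIntegrand H y :=
    norm_of_nonneg (hurstIntegrand_pos hy).le
  have hnear : IntegrableOn (hurstIntegrand H) (Ioc 0 1) := by
    have hmaj : IntegrableOn (fun y : ℝ => y ^ (H - 3/2)) (Ioc 0 1) := by
      rw [← intervalIntegrable_iff_integrableOn_Ioc_of_le zero_le_one]
      exact intervalIntegral.intervalIntegrable_rpow' (by linarith)
    refine hmaj.mono' (hmeas _ measurableSet_Ioc Ioc_subset_Ioi_self) ?_
    filter_upwards [ae_restrict_mem measurableSet_Ioc] with y hy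
    rw [hnorm hy.1]
    exact hurstIntegrand_le_rpow_sub_three_halves hy.1
  have hfar : IntegrableOn (hurstIntegrand H) (Ioi 1) := by
    refine (integrableOn_Ioi_rpow_of_lt (a := -1/2 - H) (by linarith) one_pos).mono'
      (hmeas _ measurableSet_Ioi (Ioi_subset_Ioi zero_le_one)) ?_
    filter_upwards [ae_restrict_mem measurableSet_Ioi] with y hy
    rw [hnorm (one_pos.trans hy)]
    exact hurstIntegrand_le_rpow_neg_half_sub (one_pos.trans hy)
  simpa [Ioc_union_Ioi_eq_Ioi zero_le_one] using hnear.union hfar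

theorem setIntegral_hurstIntegrand_pos (hH : 1/2 < H) :
    0 < ∫ y in Ioi 0, hurstIntegrand H y := by
  have hsupp : Function.support (hurstIntegrand H) ∩ Ioi 0 = Ioi 0 :=
    inter_eq_right.mpr fun y hy => (hurstIntegrand_pos hy).ne'
  rw [setIntegral_pos_iff_support_of_nonneg_ae
    (ae_restrict_of_forall_mem measurableSet_Ioi fun y hy => (hurstIntegrand_pos hy).le)
    (integrableOn_hurstIntegrand hH), hsupp, volume_Ioi]
  exact ENNReal.zero_lt_top

theorem rpow_mul_div_eq_mul_hurstIntegrand {δ x : ℝ} (hδ : 0 < δ) (hx : 0 < x) :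
    δ ^ (H - 1/2) * (x ^ (-1/2 - H) / (δ ^ (2*H - 1) + x ^ (1 - 2*H)))
      = δ * hurstIntegrand H (x * δ) := by
  have hδ' : δ ^ (H - 1/2) = δ * δ ^ (H - 3/2) := by
    rw [show H - 1/2 = 1 + (H - 3/2) by ring, rpow_add hδ, rpow_one]
  have hx₁ : x ^ (1 - 2*H) = (x ^ (2*H - 1))⁻¹ := by
    rw [← rpow_neg hx.le]; ring_nf
  have hx₂ : x ^ (-1/2 - H) = x ^ (H - 3/2) * (x ^ (2*H - 1))⁻¹ := by
    rw [← rpow_neg hx.le, ← rpow_add hx]; ring_nf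
  have : 0 < x ^ (2*H - 1) := rpow_pos_of_pos hx _
  have : 0 < δ ^ (2*H - 1) := rpow_pos_of_pos hδ _
  unfold hurstIntegrand
  rw [mul_rpow hx.le hδ.le, mul_rpow hx.le hδ.le, hδ', hx₁, hx₂]
  field_simp

theorem sqrt_mul_div_eq_mul_hurstIntegrand (hH : H ≠ 1/2) {ε x : ℝ} (hε : 0 < ε) (hx : 0 < x) :
    √ε * (x ^ (-1/2 - H) / (ε + x ^ (1 - 2*H)))
      = ε ^ (2*H - 1)⁻¹ * hurstIntegrand H (x * ε ^ (2*H - 1)⁻¹) := by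
  have hH' : 2*H - 1 ≠ 0 := by contrapose! hH; linarith
  set δ := ε ^ (2*H - 1)⁻¹
  have hε₁ : ε = δ ^ (2*H - 1) := by rw [← rpow_mul hε.le, inv_mul_cancel₀ hH', rpow_one]
  have hε₂ : √ε = δ ^ (H - 1/2) := by
    rw [sqrt_eq_rpow, ← rpow_mul hε.le]; congr 1; field_simp
  rw [hε₂, hε₁]
  exact rpow_mul_div_eq_mul_hurstIntegrand (rpow_pos_of_pos hε _) hx

end HurstIntegrand

/-- for `H ∈ (1/2,1)`, `I_H = ∫₀^∞ y^{H−3/2}/(y^{2H−1}+1) dy` is finite and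
positive, and `√ε · Σ_{n≥1} n^{−1/2−H}/(ε + n^{1−2H}) → I_H` as `ε → 0⁺`. -/
theorem stmt_4 (H : ℝ) (hH : H ∈ Set.Ioo (1/2 : ℝ) 1) :
    IntegrableOn (fun y : ℝ => y ^ (H - 3/2) / (y ^ (2*H - 1) + 1)) (Set.Ioi 0)
    ∧ 0 < ∫ y in Set.Ioi (0:ℝ), y ^ (H - 3/2) / (y ^ (2*H - 1) + 1)
    ∧ Filter.Tendsto
        (fun ε : ℝ => Real.sqrt ε *
          ∑' n : ℕ+, (n : ℝ) ^ (-1/2 - H) / (ε + (n : ℝ) ^ (1 - 2*H)))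
        (nhdsWithin 0 (Set.Ioi 0))
        (nhds (∫ y in Set.Ioi (0:ℝ), y ^ (H - 3/2) / (y ^ (2*H - 1) + 1))) := by
  obtain ⟨hH₁, hH₂⟩ := hH
  have integrable := integrableOn_hurstIntegrand hH₁
  refine ⟨integrable, setIntegral_hurstIntegrand_pos hH₁, ?_⟩
  have hδ := tendsto_rpow_nhdsGT_zero (inv_pos.mpr (by linarith : (0 : ℝ) < 2*H - 1))
  have hriemann := AntitoneOn.tendsto_mul_tsum_pnat_nhdsGT_zero
    (antitoneOn_hurstIntegrand hH₁.le (by linarith)) integrable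
    fun y hy => (hurstIntegrand_pos hy).le
  refine (hriemann.comp hδ).congr' ?_
  filter_upwards [self_mem_nhdsWithin] with ε hε
  simp only [Function.comp_apply, ← tsum_mul_left]
  exact tsum_congr fun n =>
    (sqrt_mul_div_eq_mul_hurstIntegrand hH₁.ne' hε (by exact_mod_cast n.pos)).symm
end

section
/- Let H ∈ (1/2, 1). Then the integral J_H = ∫₀^∞ y^{3H−5/2}/(y^{2H−1}+1)² dy is finite and strictly positive, and lim_{ε→0⁺} ε^{3/2} · Σ_{n=1}^∞ n^{−1/2−H}/(ε + n^{1−2H})² = J_H. -/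
/-!
Put `δ = ε ^ (1 / (2H - 1))` and `f y = y ^ (3H - 5/2) / (y ^ (2H - 1) + 1) ^ 2`. Term by term,
`ε ^ (3/2) · n ^ (-1/2 - H) / (ε + n ^ (1 - 2H)) ^ 2 = δ f (n δ)`, so the left side is the Riemann
sum `∑_{n ≥ 1} δ f (n δ)`, i.e. the integral over `(0, ∞)` of the step function `f (δ ⌈y / δ⌉)`.
Near `0` the function `f` behaves like `y ^ (3H - 5/2)` and near `∞` like `y ^ (-H - 1/2)`, so it
is integrable. It increases up to a single peak `m` and decreases afterwards, hence
`f (δ ⌈y / δ⌉) ≤ f y + f m · 1_{(0, m]} y`, and dominated convergence gives the limit.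
-/

open MeasureTheory Real Set Filter Topology Function

lemma setIntegral_pos_of_pos {X : Type*} [MeasurableSpace X] {μ : Measure X} {f : X → ℝ}
    {s : Set X} (hs : MeasurableSet s) (hμs : μ s ≠ 0) (hf : ∀ x ∈ s, 0 < f x)
    (hint : IntegrableOn f s μ) : 0 < ∫ x in s, f x ∂μ := by
  rw [setIntegral_pos_iff_support_of_nonneg_ae
    (ae_restrict_of_forall_mem hs fun x hx => (hf x hx).le) hint,
    inter_eq_self_of_subset_right fun x hx => mem_support.2 (hf x hx).ne']
  exact pos_iff_ne_zero.2 hμs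

lemma tendsto_rpow_inv_nhdsGT_zero {b : ℝ} (hb : 0 < b) :
    Tendsto (fun ε : ℝ => ε ^ b⁻¹) (𝓝[>] 0) (𝓝[>] 0) := by
  refine tendsto_nhdsWithin_iff.2 ⟨?_, ?_⟩
  · simpa [zero_rpow (inv_ne_zero hb.ne')] using
      ((continuousAt_rpow_const 0 b⁻¹ (Or.inr (inv_nonneg.2 hb.le))).tendsto).mono_left
        nhdsWithin_le_nhds
  · filter_upwards [self_mem_nhdsWithin] with ε hε using rpow_pos_of_pos hε _

section RiemannSum

variable {f : ℝ → ℝ} {δ : ℝ}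

lemma natCeil_div_eq_add_one_iff (hδ : 0 < δ) (y : ℝ) (n : ℕ) :
    ⌈y / δ⌉₊ = n + 1 ↔ y ∈ Ioc (n * δ) ((n + 1) * δ) := by
  rw [Nat.ceil_eq_iff n.succ_ne_zero, mem_Ioc, lt_div_iff₀ hδ, div_le_iff₀ hδ]
  push_cast
  simp

lemma iUnion_Ioc_natCast_mul (hδ : 0 < δ) :
    ⋃ n : ℕ, Ioc (n * δ) ((n + 1) * δ) = Ioi 0 := by
  ext y
  simp only [mem_iUnion, ← natCeil_div_eq_add_one_iff hδ, mem_Ioi]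
  rw [← div_pos_iff_of_pos_right hδ, ← Nat.ceil_pos]
  exact ⟨fun ⟨n, hn⟩ => hn ▸ n.succ_pos, fun h => ⟨_, (Nat.succ_pred_eq_of_pos h).symm⟩⟩

lemma pairwise_disjoint_Ioc_natCast_mul (hδ : 0 < δ) :
    Pairwise (Disjoint on fun n : ℕ => Ioc (n * δ) ((n + 1) * δ)) := by
  intro i j hij
  refine Set.disjoint_left.2 fun y hi hj => hij ?_
  rw [← natCeil_div_eq_add_one_iff hδ] at hi hj
  omega

lemma integral_comp_mul_natCeil_div (hδ : 0 < δ)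
    (hint : IntegrableOn (fun y => f (δ * ⌈y / δ⌉₊)) (Ioi 0)) :
    ∫ y in Ioi 0, f (δ * ⌈y / δ⌉₊) = ∑' n : ℕ+, δ * f (n * δ) := by
  rw [← iUnion_Ioc_natCast_mul hδ] at hint ⊢
  rw [integral_iUnion (fun _ => measurableSet_Ioc) (pairwise_disjoint_Ioc_natCast_mul hδ) hint,
    tsum_pnat_eq_tsum_succ (f := fun n : ℕ => δ * f (n * δ))]
  congr 1 with n
  have hstep : EqOn (fun y => f (δ * ⌈y / δ⌉₊)) (fun _ => f ((n + 1) * δ))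
      (Ioc (n * δ) ((n + 1) * δ)) := fun y hy => by
    simp only [(natCeil_div_eq_add_one_iff hδ y n).2 hy]
    push_cast
    ring_nf
  rw [setIntegral_congr_fun measurableSet_Ioc hstep, setIntegral_const,
    volume_real_Ioc_of_le (by gcongr; linarith), smul_eq_mul]
  push_cast
  ring

lemma le_mul_natCeil_div (hδ : 0 < δ) (y : ℝ) : y ≤ δ * ⌈y / δ⌉₊ :=
  calc y = δ * (y / δ) := by field_simp
    _ ≤ δ * ⌈y / δ⌉₊ := by gcongr; exact Nat.le_ceil _

lemma mul_natCeil_div_lt (hδ : 0 < δ) {y : ℝ} (hy : 0 ≤ y) : δ * ⌈y / δ⌉₊ < y + δ :=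
  calc δ * ⌈y / δ⌉₊ < δ * (y / δ + 1) := by gcongr; exact Nat.ceil_lt_add_one (by positivity)
    _ = y + δ := by field_simp

lemma tendsto_mul_natCeil_div {y : ℝ} (hy : 0 ≤ y) :
    Tendsto (fun δ => δ * ⌈y / δ⌉₊) (𝓝[>] 0) (𝓝 y) := by
  have hupper : Tendsto (fun δ => y + δ) (𝓝[>] 0) (𝓝 y) := by
    simpa using (tendsto_const_nhds.add tendsto_id).mono_left (nhdsWithin_le_nhds (a := (0 : ℝ)))
  refine tendsto_of_tendsto_of_tendsto_of_le_of_le' tendsto_const_nhds hupper ?_ ?_ <;>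
    filter_upwards [self_mem_nhdsWithin] with δ hδ
  exacts [le_mul_natCeil_div hδ y, (mul_natCeil_div_lt hδ hy).le]

variable {m : ℝ} (hf : ∀ y ∈ Ioi 0, 0 ≤ f y) (hmono : MonotoneOn f (Ioc 0 m))
  (hanti : AntitoneOn f (Ioi 0 ∩ Ici m))
include hf hmono hanti

lemma le_add_indicator_of_le_of_unimodal {y z : ℝ} (hy : 0 < y) (hyz : y ≤ z) :
    f z ≤ f y + (Ioc 0 m).indicator (fun _ => f m) y := by
  by_cases hym : y ≤ m
  · rw [indicator_of_mem (show y ∈ Ioc 0 m from ⟨hy, hym⟩)]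
    have hzm : f z ≤ f m := by
      rcases le_total z m with hzm | hmz
      · exact hmono ⟨hy.trans_le hyz, hzm⟩ ⟨hy.trans_le hym, le_rfl⟩ hzm
      · exact hanti ⟨hy.trans_le hym, self_mem_Ici⟩ ⟨hy.trans_le hyz, hmz⟩ hmz
    linarith [hf y hy]
  · push Not at hym
    rw [indicator_of_notMem fun h => (not_le.2 hym) h.2, add_zero]
    exact hanti ⟨hy, hym.le⟩ ⟨hy.trans_le hyz, hym.le.trans hyz⟩ hyz

theorem tendsto_tsum_mul_comp_natCast_mul_of_unimodal (hmeas : Measurable f)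
    (hcont : ContinuousOn f (Ioi 0)) (hint : IntegrableOn f (Ioi 0)) :
    Tendsto (fun δ => ∑' n : ℕ+, δ * f (n * δ)) (𝓝[>] 0) (𝓝 (∫ y in Ioi 0, f y)) := by
  set bound := fun y => f y + (Ioc 0 m).indicator (fun _ => f m) y
  have hbound : IntegrableOn bound (Ioi 0) :=
    hint.add ((integrableOn_const measure_Ioc_lt_top.ne).integrable_indicator
      measurableSet_Ioc).integrableOn
  have hstep_meas : ∀ δ, AEStronglyMeasurable (fun y => f (δ * ⌈y / δ⌉₊))
      (volume.restrict (Ioi 0)) := fun δ =>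
    (hmeas.comp (measurable_const.mul (measurable_from_top.comp
      (Nat.measurable_ceil.comp (measurable_id.div_const δ))))).aestronglyMeasurable
  have hstep_le : ∀ δ ∈ Ioi (0 : ℝ), ∀ᵐ y ∂volume.restrict (Ioi 0),
      ‖f (δ * ⌈y / δ⌉₊)‖ ≤ bound y := fun δ hδ => by
    filter_upwards [ae_restrict_mem measurableSet_Ioi] with y hy
    have hgrid := le_mul_natCeil_div hδ y
    rw [Real.norm_of_nonneg (hf _ (lt_of_lt_of_le hy hgrid))]
    exact le_add_indicator_of_le_of_unimodal hf hmono hanti hy hgrid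
  have hlim := tendsto_integral_filter_of_dominated_convergence bound
    (Eventually.of_forall hstep_meas) (eventually_mem_nhdsWithin.mono hstep_le) hbound
    (by
      filter_upwards [ae_restrict_mem measurableSet_Ioi] with y hy
      exact ((hcont y hy).continuousAt (Ioi_mem_nhds hy)).tendsto.comp
        (tendsto_mul_natCeil_div hy.le))
  refine hlim.congr' ?_
  filter_upwards [self_mem_nhdsWithin] with δ hδ
  exact integral_comp_mul_natCeil_div hδ (hbound.mono' (hstep_meas δ) (hstep_le δ hδ))

end RiemannSum

section RpowDivRpowAddOneSq

variable {a b : ℝ}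

lemma integrableOn_rpow_div_rpow_add_one_sq (ha : -1 < a) (hab : a - 2 * b < -1) :
    IntegrableOn (fun y : ℝ => y ^ a / (y ^ b + 1) ^ 2) (Ioi 0) := by
  have hmeas : AEStronglyMeasurable (fun y : ℝ => y ^ a / (y ^ b + 1) ^ 2) :=
    (by fun_prop : Measurable fun y : ℝ => y ^ a / (y ^ b + 1) ^ 2).aestronglyMeasurable
  rw [← Ioc_union_Ioi_eq_Ioi zero_le_one]
  refine IntegrableOn.union ?_ ?_
  · have hpow : IntegrableOn (fun y : ℝ => y ^ a) (Ioc 0 1) :=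
      (intervalIntegrable_iff_integrableOn_Ioc_of_le zero_le_one).1
        (intervalIntegral.intervalIntegrable_rpow' ha)
    refine hpow.mono' hmeas.restrict (ae_restrict_of_forall_mem measurableSet_Ioc fun y hy => ?_)
    have hy : 0 < y := hy.1
    rw [Real.norm_of_nonneg (by positivity)]
    exact div_le_self (by positivity) (one_le_pow₀ (by linarith [rpow_nonneg hy.le b]))
  · refine (integrableOn_Ioi_rpow_of_lt hab zero_lt_one).mono' hmeas.restrict
      (ae_restrict_of_forall_mem measurableSet_Ioi fun y hy => ?_)
    have hy : 0 < y := zero_lt_one.trans hy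
    rw [Real.norm_of_nonneg (by positivity), rpow_sub hy, mul_comm 2 b, rpow_mul hy.le, rpow_two]
    gcongr
    linarith

lemma hasDerivAt_rpow_div_rpow_add_one_sq {x : ℝ} (hx : 0 < x) :
    HasDerivAt (fun y : ℝ => y ^ a / (y ^ b + 1) ^ 2)
      (x ^ (a - 1) * (a - (2 * b - a) * x ^ b) / (x ^ b + 1) ^ 3) x := by
  have hnum := hasDerivAt_rpow_const (p := a) (Or.inl hx.ne')
  have hden := ((hasDerivAt_rpow_const (p := b) (Or.inl hx.ne')).add_const 1).fun_pow 2
  have hx_b := rpow_pos_of_pos hx b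
  refine (hnum.div hden (by positivity)).congr_deriv ?_
  rw [rpow_sub_one hx.ne', rpow_sub_one hx.ne']
  field_simp
  ring

lemma continuousOn_rpow_div_rpow_add_one_sq :
    ContinuousOn (fun y : ℝ => y ^ a / (y ^ b + 1) ^ 2) (Ioi 0) := fun _ hx =>
  (hasDerivAt_rpow_div_rpow_add_one_sq hx).continuousAt.continuousWithinAt

/-- The point where the derivative of `y ↦ y ^ a / (y ^ b + 1) ^ 2` changes sign
(it is `0` when `a ≤ 0`, the function then being decreasing on `(0, ∞)`). -/
noncomputable def peak (a b : ℝ) : ℝ := (max a 0 / (2 * b - a)) ^ b⁻¹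

lemma peak_nonneg (hab : a < 2 * b) : 0 ≤ peak a b :=
  rpow_nonneg (div_nonneg (le_max_right a 0) (by linarith)) _

lemma peak_rpow (hb : 0 < b) (hab : a < 2 * b) : peak a b ^ b = max a 0 / (2 * b - a) :=
  rpow_inv_rpow (div_nonneg (le_max_right a 0) (by linarith)) hb.ne'

lemma monotoneOn_rpow_div_rpow_add_one_sq (hb : 0 < b) (hab : a < 2 * b) :
    MonotoneOn (fun y : ℝ => y ^ a / (y ^ b + 1) ^ 2) (Ioc 0 (peak a b)) := by
  refine monotoneOn_of_hasDerivWithinAt_nonneg (convex_Ioc _ _)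
    (continuousOn_rpow_div_rpow_add_one_sq.mono Ioc_subset_Ioi_self)
    (fun x hx => (hasDerivAt_rpow_div_rpow_add_one_sq (interior_subset hx).1).hasDerivWithinAt)
    fun x hx => ?_
  rw [interior_Ioc] at hx
  have hxb : 0 < x ^ b := rpow_pos_of_pos hx.1 b
  have hlt : x ^ b < max a 0 / (2 * b - a) := peak_rpow hb hab ▸ rpow_lt_rpow hx.1.le hx.2 hb
  rw [lt_div_iff₀ (by linarith)] at hlt
  have hfactor : 0 ≤ a - (2 * b - a) * x ^ b := by
    rcases max_cases a 0 with ⟨h, -⟩ | ⟨h, -⟩ <;> nlinarith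
  have hxa := rpow_pos_of_pos hx.1 (a - 1)
  positivity

lemma antitoneOn_rpow_div_rpow_add_one_sq (hb : 0 < b) (hab : a < 2 * b) :
    AntitoneOn (fun y : ℝ => y ^ a / (y ^ b + 1) ^ 2) (Ioi 0 ∩ Ici (peak a b)) := by
  have hinterior : interior (Ioi 0 ∩ Ici (peak a b)) = Ioi 0 ∩ Ioi (peak a b) := by
    rw [interior_inter, interior_Ioi, interior_Ici]
  refine antitoneOn_of_hasDerivWithinAt_nonpos ((convex_Ioi _).inter (convex_Ici _))
    (f' := fun x => x ^ (a - 1) * (a - (2 * b - a) * x ^ b) / (x ^ b + 1) ^ 3)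
    (continuousOn_rpow_div_rpow_add_one_sq.mono inter_subset_left) ?_ ?_ <;>
    rw [hinterior] <;> intro x hx
  · exact (hasDerivAt_rpow_div_rpow_add_one_sq hx.1).hasDerivWithinAt
  have hle : max a 0 / (2 * b - a) ≤ x ^ b :=
    peak_rpow hb hab ▸ rpow_le_rpow (peak_nonneg hab) hx.2.le hb.le
  rw [div_le_iff₀ (by linarith)] at hle
  have hfactor : a - (2 * b - a) * x ^ b ≤ 0 := by linarith [le_max_left a 0]
  have hxb := rpow_pos_of_pos hx.1 b
  exact div_nonpos_of_nonpos_of_nonneg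
    (mul_nonpos_of_nonneg_of_nonpos (rpow_pos_of_pos hx.1 (a - 1)).le hfactor) (by positivity)

lemma mul_rpow_div_rpow_add_one_sq {δ x : ℝ} (hδ : 0 < δ) (hx : 0 < x) :
    δ * ((x * δ) ^ a / ((x * δ) ^ b + 1) ^ 2)
      = δ ^ (a + 1) * (x ^ (a - 2 * b) / (δ ^ b + x ^ (-b)) ^ 2) := by
  rw [mul_rpow hx.le hδ.le, mul_rpow hx.le hδ.le, rpow_add_one hδ.ne', rpow_sub hx, rpow_neg hx.le,
    mul_comm 2 b, rpow_mul hx.le, rpow_two]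
  have hxb := rpow_pos_of_pos hx b
  have hδb := rpow_pos_of_pos hδ b
  field_simp

end RpowDivRpowAddOneSq

/-- for `H ∈ (1/2,1)`, `J_H = ∫₀^∞ y^{3H−5/2}/(y^{2H−1}+1)² dy` is finite and
positive, and `ε^{3/2} · Σ_{n≥1} n^{−1/2−H}/(ε + n^{1−2H})² → J_H` as `ε → 0⁺`. -/
theorem stmt_5 (H : ℝ) (hH : H ∈ Set.Ioo (1/2 : ℝ) 1) :
    IntegrableOn (fun y : ℝ => y ^ (3*H - 5/2) / (y ^ (2*H - 1) + 1) ^ 2) (Set.Ioi 0)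
    ∧ 0 < ∫ y in Set.Ioi (0:ℝ), y ^ (3*H - 5/2) / (y ^ (2*H - 1) + 1) ^ 2
    ∧ Filter.Tendsto
        (fun ε : ℝ => ε ^ (3/2 : ℝ) *
          ∑' n : ℕ+, (n : ℝ) ^ (-1/2 - H) / (ε + (n : ℝ) ^ (1 - 2*H)) ^ 2)
        (nhdsWithin 0 (Set.Ioi 0))
        (nhds (∫ y in Set.Ioi (0:ℝ), y ^ (3*H - 5/2) / (y ^ (2*H - 1) + 1) ^ 2)) := by
  obtain ⟨hH₁, -⟩ := hH
  have hb : 0 < 2 * H - 1 := by linarith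
  have hab : 3 * H - 5 / 2 < 2 * (2 * H - 1) := by linarith
  have hint := integrableOn_rpow_div_rpow_add_one_sq (a := 3 * H - 5 / 2) (b := 2 * H - 1)
    (by linarith) (by linarith)
  have hpos : ∀ y ∈ Ioi (0 : ℝ), 0 < y ^ (3 * H - 5 / 2) / (y ^ (2 * H - 1) + 1) ^ 2 :=
    fun y (hy : 0 < y) => by positivity
  refine ⟨hint, setIntegral_pos_of_pos measurableSet_Ioi (by simp) hpos hint, ?_⟩
  have hriemann := tendsto_tsum_mul_comp_natCast_mul_of_unimodal (fun y hy => (hpos y hy).le)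
    (monotoneOn_rpow_div_rpow_add_one_sq hb hab) (antitoneOn_rpow_div_rpow_add_one_sq hb hab)
    (by fun_prop) continuousOn_rpow_div_rpow_add_one_sq hint
  refine (hriemann.comp (tendsto_rpow_inv_nhdsGT_zero hb)).congr' ?_
  filter_upwards [self_mem_nhdsWithin] with ε (hε : 0 < ε)
  rw [comp_apply, ← tsum_mul_left]
  refine tsum_congr fun n => ?_
  rw [mul_rpow_div_rpow_add_one_sq (rpow_pos_of_pos hε _) (by positivity),
    rpow_inv_rpow hε.le hb.ne', ← rpow_mul hε.le]
  have hexp : (2 * H - 1)⁻¹ * (3 * H - 5 / 2 + 1) = 3 / 2 := by field_simp; ring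
  rw [hexp, show 3 * H - 5 / 2 - 2 * (2 * H - 1) = -1 / 2 - H by ring,
    show -(2 * H - 1) = 1 - 2 * H by ring]
end
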